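/- Let (R, m) be a Noetherian local ring of prime characteristic p and dimension d. Suppose that for every m-primary ideal a, every x ∈ R, and every q = p^e (e ≥ 1), (a^{[q]} : x^q) = ((a : x))^{[q]}. Then λ(R/m^{[pq]}) = λ(R/m^{[p]}) · λ(R/m^{[q]}) for all q = p^e. -/

import Mathlib

open IsLocalRing
open Order

section PROD
variable {α β : Type*} [Preorder α] [Preorder β]

lemma prod_series_le (p : LTSeries (α × β)) :
    (p.length : ℕ∞) ≤ height p.last.1 + height p.last.2 := by
  generalize hn : p.length = n
  induction n generalizing p with
  | zero => simp [hn]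
  | succ n ih =>
    have hne : p.length ≠ 0 := by omega
    have hlt : p.eraseLast.last < p.last := p.eraseLast_last_rel_last hne
    have hlen : p.eraseLast.length = n := by simp [RelSeries.eraseLast, hn]
    have H := ih p.eraseLast hlen
    by_cases h1 : height p.last.1 = ⊤
    · simp [h1]
    by_cases h2 : height p.last.2 = ⊤
    · simp [h2]
    have hle1 : p.eraseLast.last.1 ≤ p.last.1 := le_of_lt hlt |>.1
    have hle2 : p.eraseLast.last.2 ≤ p.last.2 := le_of_lt hlt |>.2
    have hfin1 : height p.eraseLast.last.1 < ⊤ :=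
      lt_of_le_of_lt (height_mono hle1) (lt_top_iff_ne_top.2 h1)
    have hfin2 : height p.eraseLast.last.2 < ⊤ :=
      lt_of_le_of_lt (height_mono hle2) (lt_top_iff_ne_top.2 h2)
    have key : height p.eraseLast.last.1 + height p.eraseLast.last.2 + 1
        ≤ height p.last.1 + height p.last.2 := by
      rcases Prod.lt_iff.mp hlt with ⟨hlt1, hle2'⟩ | ⟨hle1', hlt2⟩
      · have := height_strictMono hlt1 hfin1
        calc height p.eraseLast.last.1 + height p.eraseLast.last.2 + 1
            = (height p.eraseLast.last.1 + 1) + height p.eraseLast.last.2 := by ring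
          _ ≤ height p.last.1 + height p.last.2 :=
            add_le_add (Order.add_one_le_of_lt this) (height_mono hle2')
      · have := height_strictMono hlt2 hfin2
        calc height p.eraseLast.last.1 + height p.eraseLast.last.2 + 1
            = height p.eraseLast.last.1 + (height p.eraseLast.last.2 + 1) := by ring
          _ ≤ height p.last.1 + height p.last.2 :=
            add_le_add (height_mono hle1') (Order.add_one_le_of_lt this)
    calc ((n + 1 : ℕ) : ℕ∞) = (n : ℕ∞) + 1 := by push_cast; ring
      _ ≤ height p.eraseLast.last.1 + height p.eraseLast.last.2 + 1 := by
          exact add_le_add (hlen ▸ H) le_rfl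
      _ ≤ _ := key

lemma height_prod_le (x : α × β) : height x ≤ height x.1 + height x.2 := by
  apply Order.height_le
  intro p hp
  simpa [hp] using prod_series_le p
end PROD

/-- The `q`-th Frobenius power of an ideal: the ideal generated by `q`-th powers of its elements. -/
def Ideal.fpow {R : Type*} [CommRing R] (I : Ideal R) (q : ℕ) : Ideal R :=
  Ideal.span ((· ^ q) '' (I : Set R))

/-- The length of a module, expressed as the Krull dimension of its lattice of submodules. -/
noncomputable def moduleLength (R M : Type*) [CommRing R] [AddCommGroup M] [Module R M] :
    WithBot ℕ∞ :=
  Order.krullDim (Submodule R M)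

/-- An ideal of a local ring is primary to the maximal ideal. -/
def IsMPrimary {R : Type*} [CommRing R] [IsLocalRing R] (a : Ideal R) : Prop :=
  ∃ n : ℕ, (IsLocalRing.maximalIdeal R) ^ n ≤ a

noncomputable def mlen (R M : Type*) [CommRing R] [AddCommGroup M] [Module R M] : ℕ∞ :=
  Order.height (⊤ : Submodule R M)

section MLEN
variable {R M N' : Type*} [CommRing R] [AddCommGroup M] [Module R M]
  [AddCommGroup N'] [Module R N']

lemma moduleLength_eq_mlen : moduleLength R M = (mlen R M : WithBot ℕ∞) := by
  rw [moduleLength, Order.krullDim_eq_iSup_height_of_nonempty]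
  congr 1
  apply le_antisymm (iSup_le fun a => Order.height_mono le_top) (le_iSup _ ⊤)

lemma mlen_congr (e : M ≃ₗ[R] N') : mlen R M = mlen R N' := by
  have f : Submodule R M ≃o Submodule R N' := Submodule.orderIsoMapComap e
  have := Order.height_orderIso f ⊤
  rw [mlen, mlen, ← this, f.map_top]

lemma enat_eq_top_of_forall {c : ℕ∞} (h : ∀ n : ℕ, (n : ℕ∞) ≤ c) : c = ⊤ := by
  by_contra hc
  rcases WithTop.ne_top_iff_exists.mp hc with ⟨k, rfl⟩
  have := h (k + 1)
  exact absurd (Nat.cast_le.mp this) (by omega)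

lemma enat_add_le_of_forall {a b c : ℕ∞}
    (h : ∀ n m : ℕ, (n : ℕ∞) ≤ a → (m : ℕ∞) ≤ b → (n : ℕ∞) + m ≤ c) : a + b ≤ c := by
  induction a using ENat.recTopCoe with
  | top =>
    have : c = ⊤ := enat_eq_top_of_forall fun n => by
      simpa using h n 0 le_top (by simp)
    simp [this]
  | coe n =>
    induction b using ENat.recTopCoe with
    | top =>
      have : c = ⊤ := enat_eq_top_of_forall fun m => by
        calc (m : ℕ∞) ≤ (n : ℕ∞) + m := le_add_self
          _ ≤ c := h n m le_rfl le_top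
      simp [this]
    | coe m => exact_mod_cast h n m le_rfl le_rfl

lemma mlen_eq_add (N : Submodule R M) : mlen R M = mlen R N + mlen R (M ⧸ N) := by
  apply le_antisymm
  · -- upper bound via the strictly monotone map into the product
    have hsm := Submodule.strictMono_comap_prod_map N
    have h1 : mlen R M ≤ Order.height ((⊤ : Submodule R M).comap N.subtype,
        (⊤ : Submodule R M).map N.mkQ) :=
      Order.height_le_height_apply_of_strictMono _ hsm ⊤
    have htop : ((⊤ : Submodule R M).comap N.subtype, (⊤ : Submodule R M).map N.mkQ)
        = ((⊤ : Submodule R N), (⊤ : Submodule R (M ⧸ N))) := by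
      refine Prod.ext (by simp) ?_
      simp [Submodule.map_top, Submodule.range_mkQ]
    rw [htop] at h1
    exact h1.trans (height_prod_le _)
  · -- lower bound: concatenate chains
    apply enat_add_le_of_forall
    intro n m hn hm
    obtain ⟨s, hslast, hslen⟩ := Order.exists_series_of_le_height (⊤ : Submodule R N) hn
    obtain ⟨t, htlast, htlen⟩ := Order.exists_series_of_le_height (⊤ : Submodule R (M ⧸ N)) hm
    -- make the quotient chain start at ⊥
    obtain ⟨t', ht'head, ht'len⟩ : ∃ t' : LTSeries (Submodule R (M ⧸ N)),
        t'.head = ⊥ ∧ m ≤ t'.length := by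
      by_cases h : t.head = ⊥
      · exact ⟨t, h, htlen.ge⟩
      · exact ⟨t.cons ⊥ (Ne.bot_lt' (Ne.symm h)), RelSeries.head_cons _ _ _, by
          rw [RelSeries.cons_length]; omega⟩
    have hmapsm : StrictMono (Submodule.map N.subtype : Submodule R N → Submodule R M) :=
      Submodule.map_strictMono_of_injective N.injective_subtype
    have hcomapsm : StrictMono (Submodule.comap N.mkQ :
        Submodule R (M ⧸ N) → Submodule R M) :=
      Submodule.comap_strictMono_of_surjective N.mkQ_surjective
    set s' := s.map (Submodule.map N.subtype) hmapsm with hs'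
    set t'' := t'.map (Submodule.comap N.mkQ) hcomapsm with ht''
    have hconnect : s'.last = t''.head := by
      rw [hs', ht'', LTSeries.last_map, LTSeries.head_map, hslast, ht'head]
      simp [Submodule.map_subtype_top, Submodule.comap_bot, Submodule.ker_mkQ]
    have hfinal := Order.length_le_height (x := (⊤ : Submodule R M))
      (p := s'.smash t'' hconnect) le_top
    have : s'.length + t''.length = (s'.smash t'' hconnect).length := by
      simp [RelSeries.smash]
    calc ((n : ℕ∞) + m) ≤ ((s'.length + t''.length : ℕ) : ℕ∞) := by
          rw [hs', ht'']
          push_cast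
          exact add_le_add (by exact_mod_cast hslen.ge) (by exact_mod_cast ht'len)
      _ ≤ _ := by rw [this] at *; exact hfinal

lemma mlen_of_subsingleton (h : Subsingleton M) : mlen R M = 0 := by
  rw [mlen, Order.height_eq_zero]
  intro a _
  rw [show a = ⊤ from Submodule.eq_top_iff'.mpr fun x => by
    rw [Subsingleton.elim x 0]; exact a.zero_mem]

lemma mlen_of_isSimpleModule (h : IsSimpleModule R M) : mlen R M = 1 := by
  apply le_antisymm
  · rw [mlen, show (1 : ℕ∞) = ((1 : ℕ) : ℕ∞) by norm_cast, Order.height_le_coe_iff]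
    intro y hy
    rw [show y = ⊥ from (h.eq_bot_or_eq_top y).resolve_right hy.ne]
    simp
  · have : ((RelSeries.singleton {(a, b) : Submodule R M × Submodule R M | a < b} ⊥).snoc ⊤ (bot_lt_top : (⊥ : Submodule R M) < ⊤)).last
        = ⊤ := RelSeries.last_snoc _ _ _
    have hh := Order.length_le_height_last
      (p := (RelSeries.singleton {(a, b) : Submodule R M × Submodule R M | a < b} ⊥).snoc ⊤
        (bot_lt_top : (⊥ : Submodule R M) < ⊤))
    rw [this] at hh
    rw [mlen]
    refine le_trans (le_of_eq ?_) hh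
    rfl

lemma mlen_step {R : Type*} [CommRing R] (J : Ideal R) (x : R) :
    mlen R (R ⧸ J) = mlen R (R ⧸ (J.colon (Ideal.span {x}))) + mlen R (R ⧸ (J ⊔ Ideal.span {x})) := by
  classical
  set N : Submodule R (R ⧸ J) := Submodule.map J.mkQ (Ideal.span {x}) with hN
  have h1 : mlen R (R ⧸ J) = mlen R N + mlen R ((R ⧸ J) ⧸ N) := mlen_eq_add N
  have h2 : mlen R ((R ⧸ J) ⧸ N) = mlen R (R ⧸ (J ⊔ Ideal.span {x})) :=
    mlen_congr (Submodule.quotientQuotientEquivQuotientSup J (Ideal.span {x}))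
  have h3 : mlen R N = mlen R (R ⧸ (J.colon (Ideal.span {x}))) := by
    have hker : LinearMap.ker (LinearMap.toSpanSingleton R (R ⧸ J) (J.mkQ x))
        = J.colon (Ideal.span {x}) := by
      ext r
      rw [LinearMap.mem_ker, LinearMap.toSpanSingleton_apply, Ideal.mem_colon_span_singleton]
      rw [← map_smul, smul_eq_mul, Submodule.mkQ_apply, Submodule.Quotient.mk_eq_zero]
    have hrange : LinearMap.range (LinearMap.toSpanSingleton R (R ⧸ J) (J.mkQ x)) = N := by
      rw [← LinearMap.span_singleton_eq_range, hN, ← Ideal.submodule_span_eq,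
        Submodule.map_span, Set.image_singleton]
    have e1 : (R ⧸ (J.colon (Ideal.span {x}))) ≃ₗ[R] N :=
      ((Submodule.quotEquivOfEq _ _ hker.symm).trans
        (LinearMap.toSpanSingleton R (R ⧸ J) (J.mkQ x)).quotKerEquivRange).trans
        (LinearEquiv.ofEq _ _ hrange)
    exact (mlen_congr e1).symm
  rw [h1, h2, h3]

end MLEN

section FPOW
variable {R : Type*} [CommRing R] (p : ℕ) [ExpChar R p]

lemma fpow_eq_map (I : Ideal R) (e : ℕ) :
    Ideal.fpow I (p ^ e) = I.map (iterateFrobenius R p e) := by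
  have himg : ((· ^ p ^ e) '' (I : Set R)) = ⇑(iterateFrobenius R p e) '' (I : Set R) := by
    apply Set.image_congr
    intro z _
    exact (iterateFrobenius_def p e z).symm
  rw [Ideal.fpow, himg, Ideal.map]

lemma fpow_sup (I J : Ideal R) (e : ℕ) :
    Ideal.fpow (I ⊔ J) (p ^ e) = Ideal.fpow I (p ^ e) ⊔ Ideal.fpow J (p ^ e) := by
  simp only [fpow_eq_map, Ideal.map_sup]

lemma fpow_span_singleton (x : R) (e : ℕ) :
    Ideal.fpow (Ideal.span {x}) (p ^ e) = Ideal.span {x ^ p ^ e} := by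
  rw [fpow_eq_map, Ideal.map_span, Set.image_singleton, iterateFrobenius_def]

lemma fpow_top (e : ℕ) : Ideal.fpow (⊤ : Ideal R) (p ^ e) = ⊤ := by
  rw [fpow_eq_map, Ideal.map_top]

lemma fpow_fpow (I : Ideal R) (e : ℕ) :
    Ideal.fpow (Ideal.fpow I (p ^ e)) (p ^ 1) = Ideal.fpow I (p * p ^ e) := by
  have h : p * p ^ e = p ^ (1 + e) := by rw [pow_add, pow_one]
  rw [h, fpow_eq_map, fpow_eq_map, fpow_eq_map, Ideal.map_map, iterateFrobenius_add]

end FPOW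

section MAIN
variable {R : Type*} [CommRing R] [IsLocalRing R] [IsNoetherianRing R]
  (p : ℕ) (hp : p.Prime) [CharP R p]

open IsLocalRing

lemma fpow_isMPrimary (e : ℕ) : IsMPrimary (Ideal.fpow (maximalIdeal R) (p ^ e)) := by
  have hrad : maximalIdeal R ≤ (Ideal.fpow (maximalIdeal R) (p ^ e)).radical := by
    intro x hx
    exact ⟨p ^ e, Ideal.subset_span ⟨x, hx, rfl⟩⟩
  obtain ⟨k, hk⟩ := Ideal.exists_radical_pow_le_of_fg (Ideal.fpow (maximalIdeal R) (p ^ e))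
    (IsNoetherian.noetherian _)
  exact ⟨k, (Ideal.pow_right_mono hrad k).trans hk⟩

lemma main_induction (hp : p.Prime)
    (hC : ∀ a : Ideal R, IsMPrimary a → ∀ x : R, ∀ e : ℕ, 1 ≤ e →
      Submodule.colon (Ideal.fpow a (p ^ e)) (Ideal.span {x ^ p ^ e}) =
        Ideal.fpow (Submodule.colon a (Ideal.span {x})) (p ^ e))
    (K : Ideal R) (hK : IsMPrimary K) :
    mlen R (R ⧸ Ideal.fpow K (p ^ 1)) =
      mlen R (R ⧸ K) * mlen R (R ⧸ Ideal.fpow (maximalIdeal R) (p ^ 1)) := by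
  classical
  haveI : ExpChar R p := ExpChar.prime hp
  induction K using IsNoetherian.induction with
  | _ K ih =>
  by_cases htop : K = ⊤
  · subst htop
    rw [fpow_top, mlen_of_subsingleton (Submodule.Quotient.subsingleton_iff.mpr rfl),
      zero_mul]
  obtain ⟨nn, hn⟩ := hK
  have hprim : ∃ n : ℕ, (maximalIdeal R) ^ n ≤ K := ⟨nn, hn⟩
  set n := Nat.find hprim with hn_def
  have hnle : (maximalIdeal R) ^ n ≤ K := Nat.find_spec hprim
  have npos : 0 < n := by
    rcases Nat.eq_zero_or_pos n with h0 | h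
    · exfalso
      apply htop
      rw [eq_top_iff]
      simpa [h0] using hnle
    · exact h
  have hnot : ¬ ((maximalIdeal R) ^ (n - 1) ≤ K) := Nat.find_min hprim (by omega)
  obtain ⟨x, hx, hxK⟩ := SetLike.not_le_iff_exists.mp hnot
  set K' := K ⊔ Ideal.span {x} with hK'def
  have hKK' : K < K' := by
    refine lt_of_le_of_ne le_sup_left fun h => hxK ?_
    rw [h, hK'def]
    exact Ideal.mem_sup_right (Ideal.mem_span_singleton_self x)
  have hcolon : Submodule.colon K (Ideal.span {x}) = maximalIdeal R := by
    refine ((maximalIdeal.isMaximal R).eq_of_le (fun h1 => hxK ?_) fun a ha => ?_).symm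
    · have : (1 : R) ∈ Submodule.colon K (Ideal.span {x}) := h1 ▸ Submodule.mem_top
      simpa using Ideal.mem_colon_span_singleton.mp this
    · rw [Ideal.mem_colon_span_singleton]
      have : a * x ∈ maximalIdeal R * (maximalIdeal R) ^ (n - 1) :=
        Ideal.mul_mem_mul ha hx
      refine hnle ?_
      have heq : maximalIdeal R * (maximalIdeal R) ^ (n - 1) = (maximalIdeal R) ^ n := by
        rw [← pow_succ']
        congr 1
        omega
      rwa [heq] at this
  have hsimple : mlen R (R ⧸ (maximalIdeal R)) = 1 :=
    mlen_of_isSimpleModule (isSimpleModule_iff_isCoatom.mpr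
      (Ideal.isMaximal_def.mp (maximalIdeal.isMaximal R)))
  have step1 : mlen R (R ⧸ K) = 1 + mlen R (R ⧸ K') := by
    rw [mlen_step K x, hcolon, hsimple, hK'def]
  have hCK := hC K ⟨nn, hn⟩ x 1 le_rfl
  rw [hcolon] at hCK
  have hsup : Ideal.fpow K (p ^ 1) ⊔ Ideal.span {x ^ p ^ 1} = Ideal.fpow K' (p ^ 1) := by
    rw [hK'def, fpow_sup, fpow_span_singleton]
  have step2 : mlen R (R ⧸ Ideal.fpow K (p ^ 1)) =
      mlen R (R ⧸ Ideal.fpow (maximalIdeal R) (p ^ 1)) +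
        mlen R (R ⧸ Ideal.fpow K' (p ^ 1)) := by
    rw [mlen_step (Ideal.fpow K (p ^ 1)) (x ^ p ^ 1), hCK, hsup]
  have hK'prim : IsMPrimary K' := ⟨nn, hn.trans le_sup_left⟩
  have ihK' := ih K' hKK' hK'prim
  rw [step2, ihK', step1, one_add_mul]

end MAIN

theorem stmt6 (R : Type*) [CommRing R] [IsLocalRing R] [IsNoetherianRing R]
    (p : ℕ) (hp : p.Prime) [CharP R p]
    (hC : ∀ a : Ideal R, IsMPrimary a → ∀ x : R, ∀ e : ℕ, 1 ≤ e →
      Submodule.colon (Ideal.fpow a (p ^ e)) (Ideal.span {x ^ p ^ e}) =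
        Ideal.fpow (Submodule.colon a (Ideal.span {x})) (p ^ e))
    (e : ℕ) :
    moduleLength R (R ⧸ Ideal.fpow (maximalIdeal R) (p * p ^ e)) =
      moduleLength R (R ⧸ Ideal.fpow (maximalIdeal R) p) *
        moduleLength R (R ⧸ Ideal.fpow (maximalIdeal R) (p ^ e)) := by
  haveI : ExpChar R p := ExpChar.prime hp
  have h := main_induction p hp hC (Ideal.fpow (maximalIdeal R) (p ^ e)) (fpow_isMPrimary p e)
  rw [fpow_fpow, pow_one] at h
  rw [moduleLength_eq_mlen, moduleLength_eq_mlen, moduleLength_eq_mlen, h, mul_comm]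
  push_cast
  ring
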